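/- For every integer k ≥ 3 and every finite simple graph G, the chromatic number of G is at most k if and only if the signed graph S(G) admits a homomorphism to (K_{2k},M). -/

import Mathlib

open SimpleGraph

/-- The sign of a walk in a signed graph `(G, σ)`: the product of the signs of its edges,
counted with multiplicity. -/
def walkSign {V : Type*} {G : SimpleGraph V} (σ : Sym2 V → ℤˣ) {u v : V}
    (w : G.Walk u v) : ℤˣ :=
  (w.edges.map σ).prod

/-- A homomorphism of signed graphs: a graph homomorphism which preserves the signs of
closed walks. -/
def IsSignedHom {U V : Type*} (G : SimpleGraph U) (σ : Sym2 U → ℤˣ)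
    (H : SimpleGraph V) (π : Sym2 V → ℤˣ) (f : G →g H) : Prop :=
  ∀ (u : U) (w : G.Walk u u), walkSign π (w.map f) = walkSign σ w

/-- `(G, σ)` admits a homomorphism to `(H, π)`. -/
def SignedHom {U V : Type*} (G : SimpleGraph U) (σ : Sym2 U → ℤˣ)
    (H : SimpleGraph V) (π : Sym2 V → ℤˣ) : Prop :=
  ∃ f : G →g H, IsSignedHom G σ H π f

/-- The signature on the complete graph `K_n` (with `n` even, vertices `0, …, n-1`) whose
negative edges form the perfect matching `{01, 23, 45, …}`: the edge `uv` is negative iff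
`u` and `v` lie in the same matched pair, i.e. `⌊u/2⌋ = ⌊v/2⌋`. -/
def matchSign (n : ℕ) : Sym2 (Fin n) → ℤˣ :=
  Sym2.lift ⟨fun a b => if (a : ℕ) / 2 = (b : ℕ) / 2 then -1 else 1, by
    intro a b
    simp only [eq_comm]⟩

/-- The underlying graph of `S(G)`: keep the vertices of `G`; for each edge `e = uv` of `G` add
two new vertices `x_e = (e, false)` and `y_e = (e, true)`, each joined to `u` and to `v`; the
edge `uv` itself is not present. -/
def SGraph {V : Type*} (G : SimpleGraph V) : SimpleGraph (V ⊕ (G.edgeSet × Bool)) where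
  Adj a b :=
    (∃ (u : V) (p : G.edgeSet × Bool), a = Sum.inl u ∧ b = Sum.inr p ∧ u ∈ (p.1 : Sym2 V)) ∨
    (∃ (u : V) (p : G.edgeSet × Bool), b = Sum.inl u ∧ a = Sum.inr p ∧ u ∈ (p.1 : Sym2 V))
  symm := ⟨fun _ _ h => Or.symm h⟩
  loopless := ⟨by
    rintro a (⟨u, p, h₁, h₂, -⟩ | ⟨u, p, h₁, h₂, -⟩) <;> rw [h₁] at h₂ <;> exact absurd h₂ (by simp)⟩

/-- A signature on `S(G)` is admissible if in each of the 4-cycles `u x_e v y_e`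
(where `e = uv` is an edge of `G`) exactly one of the four edges is negative. -/
def SGraphSignature {V : Type*} (G : SimpleGraph V) (σS : Sym2 (V ⊕ (G.edgeSet × Bool)) → ℤˣ) :
    Prop :=
  ∀ (e : G.edgeSet) (u v : V), (e : Sym2 V) = s(u, v) →
    ([σS s(Sum.inl u, Sum.inr (e, false)), σS s(Sum.inl v, Sum.inr (e, false)),
      σS s(Sum.inl u, Sum.inr (e, true)), σS s(Sum.inl v, Sum.inr (e, true))].count (-1) = 1)

/-!
A proper colouring `c : V → Fin k` gives the map `u ↦ 2 c(u)`. A subdivision vertex `x_e` of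
`e = uv` goes to an even vertex `2 l` with `l ∉ {c(u), c(v)}` (this needs `k ≥ 3`) if its two
edges have equal signs, and to the partner `2 c(u) + 1` of `2 c(u)` otherwise; in both cases the
edge signs agree with those of `S(G)` up to switching at `x_e`, and switching preserves the signs
of closed walks. Conversely, a homomorphism `f` colours `u` by the matched pair containing `f(u)`:
if adjacent `u, v` got the same pair, the signs of the negative 4-cycle `u x_e v y_e` would pair
up in its image, a positive closed walk.
-/

open Sum

lemma Int.units_list_prod_eq_neg_one_pow_count (l : List ℤˣ) :
    l.prod = (-1) ^ l.count (-1) := by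
  induction l with
  | nil => simp
  | cons a l ih =>
    rcases Int.units_eq_one_or a with rfl | rfl <;> simp [ih, pow_succ, mul_comm]

section WalkSign

variable {U W : Type*} {G : SimpleGraph U} {H : SimpleGraph W}

@[simp]
lemma walkSign_nil (σ : Sym2 U → ℤˣ) (u : U) : walkSign σ (Walk.nil : G.Walk u u) = 1 := rfl

@[simp]
lemma walkSign_cons (σ : Sym2 U → ℤˣ) {u v w : U} (h : G.Adj u v) (p : G.Walk v w) :
    walkSign σ (Walk.cons h p) = σ s(u, v) * walkSign σ p := rfl

lemma walkSign_map (π : Sym2 W → ℤˣ) (f : G →g H) {u v : U} (w : G.Walk u v) :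
    walkSign π (w.map f) = walkSign (π ∘ Sym2.map f) w := by
  simp [walkSign, Walk.edges_map]

lemma walkSign_comp_map_of_switch {σ : Sym2 U → ℤˣ} {π : Sym2 W → ℤˣ} {f : U → W} (ζ : U → ℤˣ)
    (h : ∀ a b, G.Adj a b → π s(f a, f b) = ζ a * ζ b * σ s(a, b)) {u v : U} (w : G.Walk u v) :
    walkSign (π ∘ Sym2.map f) w = ζ u * ζ v * walkSign σ w := by
  induction w with
  | nil => simp [Int.units_mul_self]
  | @cons a b c hab p ih =>
    rw [walkSign_cons, walkSign_cons, ih, Function.comp_apply, Sym2.map_mk, h a b hab]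
    calc ζ a * ζ b * σ s(a, b) * (ζ b * ζ c * walkSign σ p)
        = (ζ b * ζ b) * (ζ a * ζ c * (σ s(a, b) * walkSign σ p)) := by ac_rfl
      _ = ζ a * ζ c * (σ s(a, b) * walkSign σ p) := by rw [Int.units_mul_self, one_mul]

lemma isSignedHom_of_switch {σ : Sym2 U → ℤˣ} {π : Sym2 W → ℤˣ} (f : G →g H) (ζ : U → ℤˣ)
    (h : ∀ a b, G.Adj a b → π s(f a, f b) = ζ a * ζ b * σ s(a, b)) :
    IsSignedHom G σ H π f := fun u w => by
  rw [walkSign_map, walkSign_comp_map_of_switch ζ h, Int.units_mul_self, one_mul]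

end WalkSign

section MatchSign

variable {k : ℕ}

def matchPair (x : Fin (2 * k)) : Fin k := ⟨x / 2, by omega⟩

def matchVertex (i : Fin k) (b : Bool) : Fin (2 * k) :=
  ⟨2 * i + b.toNat, by have := b.toNat_le; omega⟩

lemma matchSign_mk (x y : Fin (2 * k)) :
    matchSign (2 * k) s(x, y) = if matchPair x = matchPair y then -1 else 1 := by
  simp [matchSign, matchPair, Fin.ext_iff]

@[simp]
lemma matchPair_matchVertex (i : Fin k) (b : Bool) : matchPair (matchVertex i b) = i := by
  have := b.toNat_le
  ext; simp only [matchPair, matchVertex]; omega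

lemma matchVertex_inj {i j : Fin k} {b c : Bool} :
    matchVertex i b = matchVertex j c ↔ i = j ∧ b = c := by
  cases b <;> cases c <;> simp [matchVertex, Fin.ext_iff] <;> omega

lemma matchSign_congr_left {x x' : Fin (2 * k)} (hx : matchPair x = matchPair x')
    (y : Fin (2 * k)) :
    matchSign (2 * k) s(x, y) = matchSign (2 * k) s(x', y) := by
  simp only [matchSign_mk, hx]

lemma exists_matchVertex_signs (hk : 3 ≤ k) {i j : Fin k} (hij : i ≠ j) (s t : ℤˣ) :
    ∃ (x : Fin (2 * k)) (ζ : ℤˣ), matchVertex i false ≠ x ∧ matchVertex j false ≠ x ∧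
      matchSign (2 * k) s(matchVertex i false, x) = ζ * s ∧
      matchSign (2 * k) s(matchVertex j false, x) = ζ * t := by
  by_cases hst : s = t
  · obtain ⟨l, hli, hlj⟩ := Fin.exists_ne_and_ne_of_two_lt i j hk
    refine ⟨matchVertex l false, s, ?_, ?_, ?_, ?_⟩ <;>
      simp [matchVertex_inj, matchSign_mk, hli.symm, hlj.symm, ← hst, Int.units_mul_self]
  · have ht : t = -s := by
      rcases Int.units_eq_one_or s with rfl | rfl <;> rcases Int.units_eq_one_or t with rfl | rfl <;>
        simp_all
    refine ⟨matchVertex i true, -s, ?_, ?_, ?_, ?_⟩ <;>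
      simp [matchVertex_inj, matchSign_mk, hij.symm, ht, Int.units_mul_self]

end MatchSign

namespace SGraph

variable {V : Type*} {G : SimpleGraph V}

lemma adj_inl_inr {u : V} {p : G.edgeSet × Bool} (hu : u ∈ (p.1 : Sym2 V)) :
    (SGraph G).Adj (inl u) (inr p) :=
  Or.inl ⟨u, p, rfl, rfl, hu⟩

lemma adj_induction {P : V ⊕ (G.edgeSet × Bool) → V ⊕ (G.edgeSet × Bool) → Prop}
    (symm : ∀ {a b}, P a b → P b a) (h : ∀ u p, u ∈ (p.1 : Sym2 V) → P (inl u) (inr p))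
    {a b : V ⊕ (G.edgeSet × Bool)} (hab : (SGraph G).Adj a b) : P a b := by
  rcases hab with ⟨u, p, rfl, rfl, hu⟩ | ⟨u, p, rfl, rfl, hu⟩
  exacts [h u p hu, symm (h u p hu)]

/-- The 4-cycle `u x_e v y_e u` of `S(G)` over the edge `e = uv`. -/
def square {u v : V} (huv : G.Adj u v) : (SGraph G).Walk (inl u) (inl u) :=
  let e : G.edgeSet := ⟨s(u, v), huv⟩
  .cons (adj_inl_inr (p := (e, false)) (Sym2.mem_mk_left u v))
    (.cons (adj_inl_inr (p := (e, false)) (Sym2.mem_mk_right u v)).symm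
    (.cons (adj_inl_inr (p := (e, true)) (Sym2.mem_mk_right u v))
    (.cons (adj_inl_inr (p := (e, true)) (Sym2.mem_mk_left u v)).symm .nil)))

lemma walkSign_square (σ : Sym2 (V ⊕ (G.edgeSet × Bool)) → ℤˣ) {u v : V}
    (huv : G.Adj u v) :
    walkSign σ (square huv) =
      [σ s(inl u, inr (⟨s(u, v), huv⟩, false)), σ s(inl v, inr (⟨s(u, v), huv⟩, false)),
        σ s(inl u, inr (⟨s(u, v), huv⟩, true)), σ s(inl v, inr (⟨s(u, v), huv⟩, true))].prod := by
  simp only [square, walkSign_cons, walkSign_nil, List.prod_cons, List.prod_nil,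
    Sym2.eq_swap (a := inr _)]
  ac_rfl

lemma walkSign_square_of_signature {σ : Sym2 (V ⊕ (G.edgeSet × Bool)) → ℤˣ}
    (hσ : SGraphSignature G σ) {u v : V} (huv : G.Adj u v) :
    walkSign σ (square huv) = -1 := by
  rw [walkSign_square, Int.units_list_prod_eq_neg_one_pow_count, hσ _ u v rfl, pow_one]

end SGraph

section Colorings

variable {V : Type*} {G : SimpleGraph V} {k : ℕ}

lemma exists_matchSign_eq_switch_SGraph (hk : 3 ≤ k) (σ : Sym2 (V ⊕ (G.edgeSet × Bool)) → ℤˣ)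
    (C : G.Coloring (Fin k)) (p : G.edgeSet × Bool) :
    ∃ (x : Fin (2 * k)) (ζ : ℤˣ), ∀ u ∈ (p.1 : Sym2 V), matchVertex (C u) false ≠ x ∧
      matchSign (2 * k) s(matchVertex (C u) false, x) = ζ * σ s(inl u, inr p) := by
  obtain ⟨⟨e, he⟩, b⟩ := p
  induction e using Sym2.inductionOn with
  | hf u v =>
    obtain ⟨x, ζ, hux, hvx, hu, hv⟩ := exists_matchVertex_signs hk (C.valid he)
      (σ s(inl u, inr (⟨s(u, v), he⟩, b))) (σ s(inl v, inr (⟨s(u, v), he⟩, b)))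
    refine ⟨x, ζ, fun w hw => ?_⟩
    rcases Sym2.mem_iff.mp hw with rfl | rfl
    exacts [⟨hux, hu⟩, ⟨hvx, hv⟩]

theorem signedHom_SGraph_of_colorable (hk : 3 ≤ k) (σ : Sym2 (V ⊕ (G.edgeSet × Bool)) → ℤˣ)
    (hG : G.Colorable k) : SignedHom (SGraph G) σ ⊤ (matchSign (2 * k)) := by
  obtain ⟨C⟩ := hG
  choose x ζ hx using exists_matchSign_eq_switch_SGraph hk σ C
  let F := Sum.elim (fun u => matchVertex (C u) false) x
  let f : SGraph G →g ⊤ :=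
    ⟨F, SGraph.adj_induction (P := fun a b => F a ≠ F b) Ne.symm fun u p hu => (hx p u hu).1⟩
  let ζ' : V ⊕ (G.edgeSet × Bool) → ℤˣ := Sum.elim 1 ζ
  refine ⟨f, isSignedHom_of_switch f ζ' fun a b hab => ?_⟩
  refine SGraph.adj_induction
    (P := fun a b => matchSign (2 * k) s(F a, F b) = ζ' a * ζ' b * σ s(a, b))
    (fun {c d} h => ?_) (fun u p hu => ?_) hab
  · rwa [Sym2.eq_swap (a := F d), Sym2.eq_swap (a := d), mul_comm (ζ' d)]
  · simpa [F, ζ'] using (hx p u hu).2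

theorem colorable_of_signedHom_SGraph {σ : Sym2 (V ⊕ (G.edgeSet × Bool)) → ℤˣ}
    (hσ : SGraphSignature G σ)
    (h : SignedHom (SGraph G) σ (⊤ : SimpleGraph (Fin (2 * k))) (matchSign (2 * k))) :
    G.Colorable k := by
  obtain ⟨f, hf⟩ := h
  refine ⟨Coloring.mk (fun u => matchPair (f (inl u))) fun {u v} huv hpair => ?_⟩
  have hsq := hf _ (SGraph.square huv)
  rw [SGraph.walkSign_square_of_signature hσ, walkSign_map, SGraph.walkSign_square] at hsq
  simp only [Function.comp_apply, Sym2.map_mk, matchSign_congr_left hpair, List.prod_cons,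
    List.prod_nil, mul_one, Int.units_mul_self] at hsq
  exact absurd hsq (by decide)

end Colorings

theorem chromaticNumber_le_iff_SGraph_signedHom_general {V : Type*}
    (G : SimpleGraph V) (k : ℕ) (hk : 3 ≤ k)
    (σS : Sym2 (V ⊕ (G.edgeSet × Bool)) → ℤˣ) (hσS : SGraphSignature G σS) :
    G.chromaticNumber ≤ (k : ℕ∞) ↔
      SignedHom (SGraph G) σS (⊤ : SimpleGraph (Fin (2 * k))) (matchSign (2 * k)) := by
  rw [chromaticNumber_le_iff_colorable]
  exact ⟨signedHom_SGraph_of_colorable hk σS, colorable_of_signedHom_SGraph hσS⟩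

/-- For `k ≥ 3` and a finite simple graph `G`, `χ(G) ≤ k` iff the signed graph `S(G)` admits a
homomorphism to `(K_{2k}, M)`. -/
theorem chromaticNumber_le_iff_SGraph_signedHom {V : Type*} [Fintype V]
    (G : SimpleGraph V) (k : ℕ) (hk : 3 ≤ k)
    (σS : Sym2 (V ⊕ (G.edgeSet × Bool)) → ℤˣ) (hσS : SGraphSignature G σS) :
    G.chromaticNumber ≤ (k : ℕ∞) ↔
      SignedHom (SGraph G) σS (⊤ : SimpleGraph (Fin (2 * k))) (matchSign (2 * k)) :=
  chromaticNumber_le_iff_SGraph_signedHom_general G k hk σS hσS
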